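/- arXiv:1212.1519 — 2 statements merged into one kernel-verified Lean document; each statement's English description precedes it below -/
import Mathlib

section
/- Let n ≥ 1 and 0 ≤ k ≤ n−1, and let l be a duplicate-free list whose set of entries is exactly {1, …, n} and whose last entry is k+1. Then l is isotopy equivalent to a list of the form λ₁ ++ λ₂ ++ [k+1], where λ₁ is a duplicate-free list whose set of entries is exactly {1, …, k} and λ₂ is a duplicate-free list whose set of entries is exactly {k+2, …, n}. -/
/-- An elementary move on a duplicate-free list of natural numbers: transpose two
adjacent entries `x = i_j` and `y = i_{j+1}` for which there exists a later entry
`p = i_q` (with `q > j+1`) such that `x < p < y` or `x > p > y`. -/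
def ElemMove (l l' : List ℕ) : Prop :=
  l.Nodup ∧ ∃ (a b : List ℕ) (x y : ℕ),
    l = a ++ x :: y :: b ∧ l' = a ++ y :: x :: b ∧
    ∃ p ∈ b, (x < p ∧ p < y) ∨ (y < p ∧ p < x)

/-- Isotopy equivalence: the smallest equivalence relation generated by elementary moves. -/
def IsoEquiv : List ℕ → List ℕ → Prop := Relation.EqvGen ElemMove

/-! Write `l = m ++ [p]` with `p = k + 1`. Every entry of `m` is either below or above `p`, and
an entry above `p` standing immediately before an entry below `p` may be swapped with it, the final
`p` being the witness. Hence, inductively from the right, each entry of `m` above `p` can be carried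
past all entries below `p` that follow it, which sorts `m` stably into its entries below `p`
followed by its entries above `p`. -/

lemma ElemMove.perm {l l' : List ℕ} (h : ElemMove l l') : l.Perm l' := by
  obtain ⟨-, a, b, x, y, rfl, rfl, -⟩ := h
  exact (List.Perm.swap y x b).append_left a

lemma IsoEquiv.perm {l l' : List ℕ} (h : IsoEquiv l l') : l.Perm l' := by
  induction h with
  | rel _ _ h => exact h.perm
  | refl _ => exact List.Perm.refl _
  | symm _ _ _ ih => exact ih.symm
  | trans _ _ _ _ _ ih₁ ih₂ => exact ih₁.trans ih₂

lemma ElemMove.cons {c : ℕ} {l l' : List ℕ} (h : ElemMove l l') (hc : c ∉ l) :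
    ElemMove (c :: l) (c :: l') := by
  obtain ⟨hnd, a, b, x, y, rfl, rfl, hp⟩ := h
  exact ⟨List.nodup_cons.mpr ⟨hc, hnd⟩, c :: a, b, x, y, rfl, rfl, hp⟩

lemma IsoEquiv.cons {c : ℕ} {l l' : List ℕ} (h : IsoEquiv l l') (hc : c ∉ l) :
    IsoEquiv (c :: l) (c :: l') := by
  induction h with
  | rel _ _ h => exact .rel _ _ (h.cons hc)
  | refl _ => exact .refl _
  | symm _ _ h ih => exact .symm _ _ (ih ((IsoEquiv.perm h).mem_iff.not.mpr hc))
  | trans _ _ _ h₁ _ ih₁ ih₂ =>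
    exact .trans _ _ _ (ih₁ hc) (ih₂ ((IsoEquiv.perm h₁).mem_iff.not.mp hc))

lemma isoEquiv_cons_append_of_forall_lt {c p : ℕ} {A s : List ℕ} (hp : p ∈ s) (hpc : p < c)
    (hA : ∀ a ∈ A, a < p) (hnd : (c :: (A ++ s)).Nodup) :
    IsoEquiv (c :: (A ++ s)) (A ++ c :: s) := by
  induction A with
  | nil => exact .refl _
  | cons a A ih =>
    have hswap : ElemMove (c :: a :: (A ++ s)) (a :: c :: (A ++ s)) :=
      ⟨hnd, [], A ++ s, c, a, rfl, rfl, p, List.mem_append_right A hp,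
        Or.inr ⟨hA a List.mem_cons_self, hpc⟩⟩
    have hnd' : (a :: c :: (A ++ s)).Nodup := (List.Perm.swap a c _).nodup_iff.mp hnd
    have hrest := ih (fun x hx => hA x (.tail _ hx)) (List.nodup_cons.mp hnd').2
    exact .trans _ _ _ (.rel _ _ hswap) (hrest.cons (List.nodup_cons.mp hnd').1)

lemma isoEquiv_append_filter {p : ℕ} {s : List ℕ} (hp : p ∈ s) {m : List ℕ}
    (hnd : (m ++ s).Nodup) :
    IsoEquiv (m ++ s) (m.filter (· < p) ++ (m.filter (p < ·) ++ s)) := by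
  induction m with
  | nil => exact .refl _
  | cons c t ih =>
    have hct : c ∉ t ++ s := (List.nodup_cons.mp hnd).1
    have hsplit := (ih (List.nodup_cons.mp hnd).2).cons hct
    have hne : c ≠ p := fun h => hct (h ▸ List.mem_append_right t hp)
    rcases hne.lt_or_gt with hcp | hpc
    · simpa [List.filter_cons, hcp, hcp.not_gt] using hsplit
    · simp only [List.filter_cons, hpc, hpc.not_gt, decide_true, decide_false]
      refine .trans _ _ _ hsplit (isoEquiv_cons_append_of_forall_lt (List.mem_append_right _ hp)
        hpc (fun a ha => by simpa using (List.mem_filter.mp ha).2) ?_)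
      exact (hsplit.perm.nodup_iff).mp hnd

theorem isoEquiv_normal_form_general (n k : ℕ)
    (l : List ℕ) (hnd : l.Nodup) (hmem : ∀ x, x ∈ l ↔ x ∈ Finset.Icc 1 n)
    (hlast : l.getLast? = some (k + 1)) :
    ∃ lam₁ lam₂ : List ℕ,
      lam₁.Nodup ∧ (∀ x, x ∈ lam₁ ↔ x ∈ Finset.Icc 1 k) ∧
      lam₂.Nodup ∧ (∀ x, x ∈ lam₂ ↔ x ∈ Finset.Icc (k + 2) n) ∧
      IsoEquiv l (lam₁ ++ lam₂ ++ [k + 1]) := by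
  obtain ⟨m, rfl⟩ := List.getLast?_eq_some_iff.mp hlast
  have hkn : k + 1 ≤ n := (Finset.mem_Icc.mp ((hmem _).mp (by simp))).2
  have hlast_notMem : k + 1 ∉ m := fun h => by simpa using (List.nodup_append.mp hnd).2.2 _ h
  have hm : ∀ x, x ∈ m ↔ 1 ≤ x ∧ x ≤ n ∧ x ≠ k + 1 := by
    intro x
    rw [← and_assoc, ← Finset.mem_Icc, ← hmem]
    by_cases hx : x = k + 1 <;> simp [hx, hlast_notMem]
  refine ⟨m.filter (· < k + 1), m.filter (k + 1 < ·), hnd.of_append_left.filter _, ?_,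
    hnd.of_append_left.filter _, ?_, ?_⟩
  · intro x; simp only [List.mem_filter, hm, Finset.mem_Icc, decide_eq_true_eq]; omega
  · intro x; simp only [List.mem_filter, hm, Finset.mem_Icc, decide_eq_true_eq]; omega
  · rw [List.append_assoc]
    exact isoEquiv_append_filter (List.mem_singleton_self _) hnd

/-- Normal form: a duplicate-free list with entries exactly `{1, …, n}` and last entry
`k+1` is isotopy equivalent to a list `λ₁ ++ λ₂ ++ [k+1]`, where `λ₁` has entries
exactly `{1, …, k}` and `λ₂` has entries exactly `{k+2, …, n}`. -/
theorem isoEquiv_normal_form (n k : ℕ) (hn : 1 ≤ n) (hk : k ≤ n - 1)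
    (l : List ℕ) (hnd : l.Nodup) (hmem : ∀ x, x ∈ l ↔ x ∈ Finset.Icc 1 n)
    (hlast : l.getLast? = some (k + 1)) :
    ∃ lam₁ lam₂ : List ℕ,
      lam₁.Nodup ∧ (∀ x, x ∈ lam₁ ↔ x ∈ Finset.Icc 1 k) ∧
      lam₂.Nodup ∧ (∀ x, x ∈ lam₂ ↔ x ∈ Finset.Icc (k + 2) n) ∧
      IsoEquiv l (lam₁ ++ lam₂ ++ [k + 1]) :=
  isoEquiv_normal_form_general n k l hnd hmem hlast
end

section
/- Let l be an augmentation vector over F₂ = ZMod 2 of length n ≥ 3 that contains at least one entry equal to 1. Then l can be written as a ++ [1] ++ b such that the resolved list a⁺ ++ b⁺ (of length n−1) is an augmentation vector containing at least one entry equal to 1. -/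
/-!
Resolving `l = a ++ [1] ++ b` at any entry `1` preserves the `(0,0)` entry of `B`: in the
interior because `M x * M 1 * M y = M (x + 1) * M (y + 1)`, at the ends because `M 1 * M y`
and `M (y + 1)` share their first row and `M x * M 1` and `M (x + 1)` their first column.
So only the survival of an entry `1` has to be arranged: resolving a `1` next to a `0` turns
that `0` into a `1`, and in the all-ones list of length `≥ 3` resolving the first entry leaves
the third one untouched.
-/

/-- The matrix `M(a) = [[a,1],[1,0]]` over `F₂ = ZMod 2`. -/
def M (a : ZMod 2) : Matrix (Fin 2) (Fin 2) (ZMod 2) := !![a, 1; 1, 0]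

/-- The ordered product `B(ε_1, …, ε_n) = M(ε_1)·M(ε_2)⋯M(ε_n)`. -/
def B (l : List (ZMod 2)) : Matrix (Fin 2) (Fin 2) (ZMod 2) := (l.map M).prod

/-- A list is an augmentation vector if the `(0,0)` entry of `B(l)` equals `1`. -/
def IsAug (l : List (ZMod 2)) : Prop := B l 0 0 = 1

/-- Add `1` to the first entry of a list (identity on the empty list). -/
def bumpHead : List (ZMod 2) → List (ZMod 2)
  | [] => []
  | x :: xs => (x + 1) :: xs

/-- Add `1` to the last entry of a list (identity on the empty list). -/
def bumpLast (l : List (ZMod 2)) : List (ZMod 2) := (bumpHead l.reverse).reverse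

lemma B_nil : B [] = 1 := rfl

lemma B_cons (x : ZMod 2) (l : List (ZMod 2)) : B (x :: l) = M x * B l := by
  simp [B]

lemma B_append (l₁ l₂ : List (ZMod 2)) : B (l₁ ++ l₂) = B l₁ * B l₂ := by
  simp [B]

lemma bumpLast_append_singleton (l : List (ZMod 2)) (x : ZMod 2) :
    bumpLast (l ++ [x]) = l ++ [x + 1] := by
  simp [bumpLast, bumpHead]

lemma M_mul_M_one_mul_M (x y : ZMod 2) : M x * M 1 * M y = M (x + 1) * M (y + 1) := by
  revert x y; decide

lemma M_one_mul_M_apply_zero (y : ZMod 2) (j : Fin 2) : (M 1 * M y) 0 j = M (y + 1) 0 j := by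
  revert y j; decide

lemma M_mul_M_one_apply_zero (x : ZMod 2) (i : Fin 2) : (M x * M 1) i 0 = M (x + 1) i 0 := by
  revert x i; decide

section RowCol

variable {l m n R : Type*} [Fintype m] [NonUnitalNonAssocSemiring R]

lemma Matrix.mul_apply_eq_of_row_eq {A A' : Matrix l m R} {i : l} (h : ∀ k, A i k = A' i k)
    (X : Matrix m n R) (j : n) : (A * X) i j = (A' * X) i j := by
  simp only [Matrix.mul_apply, h]

lemma Matrix.mul_apply_eq_of_col_eq {A A' : Matrix m n R} {j : n} (h : ∀ k, A k j = A' k j)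
    (X : Matrix l m R) (i : l) : (X * A) i j = (X * A') i j := by
  simp only [Matrix.mul_apply, h]

end RowCol

lemma B_resolve_apply_zero_zero (a b : List (ZMod 2)) :
    B (bumpLast a ++ bumpHead b) 0 0 = B (a ++ [1] ++ b) 0 0 := by
  rcases List.eq_nil_or_concat a with rfl | ⟨a, x, rfl⟩ <;>
    rcases b with _ | ⟨y, b⟩
  · rfl
  · simp only [bumpLast, bumpHead, List.reverse_nil, List.nil_append, List.singleton_append,
      B_cons, ← mul_assoc]
    exact (Matrix.mul_apply_eq_of_row_eq (M_one_mul_M_apply_zero y) _ _).symm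
  · simp only [List.concat_eq_append, bumpLast_append_singleton, bumpHead, List.append_nil,
      List.append_assoc, List.singleton_append, B_append, B_cons, B_nil, mul_one]
    exact (Matrix.mul_apply_eq_of_col_eq (M_mul_M_one_apply_zero x) _ _).symm
  · simp only [List.concat_eq_append, bumpLast_append_singleton, bumpHead, List.append_assoc,
      List.cons_append, List.nil_append, B_append, B_cons]
    rw [← mul_assoc (M (x + 1)), ← M_mul_M_one_mul_M]
    simp only [mul_assoc]

lemma isAug_resolve_iff (a b : List (ZMod 2)) :
    IsAug (bumpLast a ++ bumpHead b) ↔ IsAug (a ++ [1] ++ b) := by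
  rw [IsAug, IsAug, B_resolve_apply_zero_zero]

lemma List.exists_append_cons_cons_ne {α : Type*} {l : List α} {x y : α} (hx : x ∈ l)
    (hy : y ∈ l) (hxy : x ≠ y) : ∃ l₁ a b l₂, l = l₁ ++ a :: b :: l₂ ∧ a ≠ b := by
  by_contra! h
  have hchain : l.IsChain (· = ·) :=
    List.isChain_iff_forall_rel_of_append_cons_cons.mpr fun a b l₁ l₂ => h l₁ a b l₂
  rcases l with _ | ⟨c, l⟩
  · cases hx
  · have hconst : ∀ z ∈ c :: l, z = c := by
      rw [List.isChain_cons_eq_iff_eq_replicate] at hchain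
      rw [hchain]
      simp +contextual
    exact hxy ((hconst x hx).trans (hconst y hy).symm)

def HasResolutionKeepingOne (l : List (ZMod 2)) : Prop :=
  ∃ a b : List (ZMod 2), l = a ++ [1] ++ b ∧ (1 : ZMod 2) ∈ bumpLast a ++ bumpHead b

lemma hasResolutionKeepingOne_append_cons_cons {x y : ZMod 2} (hxy : x ≠ y)
    (l₁ l₂ : List (ZMod 2)) : HasResolutionKeepingOne (l₁ ++ x :: y :: l₂) := by
  have hcases : ∀ x y : ZMod 2, x ≠ y → x = 0 ∧ y = 1 ∨ x = 1 ∧ y = 0 := by decide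
  obtain ⟨rfl, rfl⟩ | ⟨rfl, rfl⟩ := hcases x y hxy
  · exact ⟨l₁ ++ [0], l₂, by simp, by simp [bumpLast_append_singleton]⟩
  · exact ⟨l₁, 0 :: l₂, by simp, by simp [bumpHead]⟩

lemma hasResolutionKeepingOne_replicate (m : ℕ) :
    HasResolutionKeepingOne (List.replicate (m + 3) 1) :=
  ⟨[], List.replicate (m + 2) 1, by simp [List.replicate_succ],
    by simp [bumpLast, bumpHead, List.replicate_succ]⟩

/-- An augmentation vector of length `n ≥ 3` containing an entry `1` admits a
resolution at an entry equal to `1` whose result is again an augmentation vector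
containing an entry `1`. -/
theorem exists_good_resolution (n : ℕ) (hn : 3 ≤ n) (l : List (ZMod 2))
    (hlen : l.length = n) (haug : IsAug l) (h1 : (1 : ZMod 2) ∈ l) :
    ∃ a b : List (ZMod 2), l = a ++ [1] ++ b ∧
      IsAug (bumpLast a ++ bumpHead b) ∧ (1 : ZMod 2) ∈ bumpLast a ++ bumpHead b := by
  suffices h : HasResolutionKeepingOne l by
    obtain ⟨a, b, rfl, hmem⟩ := h
    exact ⟨a, b, rfl, (isAug_resolve_iff a b).mpr haug, hmem⟩
  by_cases hall : ∀ x ∈ l, x = 1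
  · obtain ⟨m, rfl⟩ : ∃ m, n = m + 3 := ⟨n - 3, by omega⟩
    rw [List.eq_replicate_iff.mpr ⟨hlen, hall⟩]
    exact hasResolutionKeepingOne_replicate m
  · push Not at hall
    obtain ⟨x, hx, hx1⟩ := hall
    obtain ⟨l₁, a, b, l₂, rfl, hab⟩ := List.exists_append_cons_cons_ne h1 hx hx1.symm
    exact hasResolutionKeepingOne_append_cons_cons hab l₁ l₂
end
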